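/- arXiv:0912.5403 — 3 statements merged into one kernel-verified Lean document; each statement's English description precedes it below -/
import Mathlib

section
/- In U_q(gl(N)), the lowering composite root vector e_{ji} does not depend on the choice of the intermediate index: for all 1 ≤ i < k < j ≤ N one has [e_{jk}, e_{ki}]_q = e_{ji}, i.e. e_{jk} e_{ki} - q e_{ki} e_{jk} = e_{ji}. -/
/-!
Common setup: the quantum algebra `U_q(gl(N))` over `k = ℚ(q)`, presented by
generators `q^{±e_{ii}}` (`K i`, `Kinv i`), `e_{i,i+1}` (`E i`), `e_{i+1,i}` (`F i`)
(1-based indices; out-of-range generators are set to `0`, which yields an algebra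
isomorphic to the usual presentation), together with the composite root vectors.
-/

noncomputable section

open scoped Classical

/-- The ground field `k = ℚ(q)`. -/
abbrev kq : Type := RatFunc ℚ

/-- The indeterminate `q`. -/
def qq : kq := RatFunc.X

/-- Generators of `U_q(gl(N))`: `K i = q^{e_{ii}}`, `Kinv i = q^{-e_{ii}}`,
`E i = e_{i,i+1}`, `F i = e_{i+1,i}` (1-based). -/
inductive UqGen : Type
  | K : ℕ → UqGen
  | Kinv : ℕ → UqGen
  | E : ℕ → UqGen
  | F : ℕ → UqGen

/-- `q^{e_{ii}}` in the free algebra. -/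
def fK (i : ℕ) : FreeAlgebra kq UqGen := FreeAlgebra.ι kq (UqGen.K i)
/-- `q^{-e_{ii}}` in the free algebra. -/
def fKinv (i : ℕ) : FreeAlgebra kq UqGen := FreeAlgebra.ι kq (UqGen.Kinv i)
/-- `e_{i,i+1}` in the free algebra. -/
def fE (i : ℕ) : FreeAlgebra kq UqGen := FreeAlgebra.ι kq (UqGen.E i)
/-- `e_{i+1,i}` in the free algebra. -/
def fF (i : ℕ) : FreeAlgebra kq UqGen := FreeAlgebra.ι kq (UqGen.F i)

/-- The defining relations of `U_q(gl(N))`.  Valid index ranges: `1 ≤ i ≤ N` for the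
Cartan generators, `1 ≤ i ≤ N-1` for `E i`, `F i`; out-of-range generators are set to `0`. -/
inductive UqRel (N : ℕ) : FreeAlgebra kq UqGen → FreeAlgebra kq UqGen → Prop
  | Kzero (i : ℕ) (h : i = 0 ∨ N < i) : UqRel N (fK i) 0
  | Kinvzero (i : ℕ) (h : i = 0 ∨ N < i) : UqRel N (fKinv i) 0
  | Ezero (i : ℕ) (h : i = 0 ∨ N < i + 1) : UqRel N (fE i) 0
  | Fzero (i : ℕ) (h : i = 0 ∨ N < i + 1) : UqRel N (fF i) 0
  | KKinv (i : ℕ) (h1 : 1 ≤ i) (h2 : i ≤ N) : UqRel N (fK i * fKinv i) 1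
  | KinvK (i : ℕ) (h1 : 1 ≤ i) (h2 : i ≤ N) : UqRel N (fKinv i * fK i) 1
  | KK (i j : ℕ) (h1 : 1 ≤ i) (h2 : i ≤ N) (h3 : 1 ≤ j) (h4 : j ≤ N) :
      UqRel N (fK i * fK j) (fK j * fK i)
  | KE (i j : ℕ) (h1 : 1 ≤ i) (h2 : i ≤ N) (h3 : 1 ≤ j) (h4 : j + 1 ≤ N) :
      UqRel N (fK i * fE j * fKinv i)
        ((qq ^ (((if i = j then 1 else 0) - (if i = j + 1 then 1 else 0) : ℤ))) • fE j)
  | KF (i j : ℕ) (h1 : 1 ≤ i) (h2 : i ≤ N) (h3 : 1 ≤ j) (h4 : j + 1 ≤ N) :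
      UqRel N (fK i * fF j * fKinv i)
        ((qq ^ (((if i = j + 1 then 1 else 0) - (if i = j then 1 else 0) : ℤ))) • fF j)
  | EF (i j : ℕ) (h1 : 1 ≤ i) (h2 : i + 1 ≤ N) (h3 : 1 ≤ j) (h4 : j + 1 ≤ N) :
      UqRel N (fE i * fF j - fF j * fE i)
        (if i = j then (qq - qq⁻¹)⁻¹ • (fK i * fKinv (i + 1) - fK (i + 1) * fKinv i) else 0)
  | EE (i j : ℕ) (h1 : 1 ≤ i) (h2 : i + 1 ≤ N) (h3 : 1 ≤ j) (h4 : j + 1 ≤ N)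
      (h5 : i + 2 ≤ j ∨ j + 2 ≤ i) : UqRel N (fE i * fE j) (fE j * fE i)
  | FF (i j : ℕ) (h1 : 1 ≤ i) (h2 : i + 1 ≤ N) (h3 : 1 ≤ j) (h4 : j + 1 ≤ N)
      (h5 : i + 2 ≤ j ∨ j + 2 ≤ i) : UqRel N (fF i * fF j) (fF j * fF i)
  | SerreE (i j : ℕ) (h1 : 1 ≤ i) (h2 : i + 1 ≤ N) (h3 : 1 ≤ j) (h4 : j + 1 ≤ N)
      (h5 : i + 1 = j ∨ j + 1 = i) :
      UqRel N (fE i ^ 2 * fE j - (qq + qq⁻¹) • (fE i * fE j * fE i) + fE j * fE i ^ 2) 0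
  | SerreF (i j : ℕ) (h1 : 1 ≤ i) (h2 : i + 1 ≤ N) (h3 : 1 ≤ j) (h4 : j + 1 ≤ N)
      (h5 : i + 1 = j ∨ j + 1 = i) :
      UqRel N (fF i ^ 2 * fF j - (qq + qq⁻¹) • (fF i * fF j * fF i) + fF j * fF i ^ 2) 0

/-- The quantum algebra `U_q(gl(N))`. -/
abbrev Uq (N : ℕ) : Type := RingQuot (UqRel N)

/-- Canonical projection onto `U_q(gl(N))`. -/
def mkU (N : ℕ) : FreeAlgebra kq UqGen →ₐ[kq] Uq N := RingQuot.mkAlgHom kq (UqRel N)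

/-- `q^{e_{ii}}` in `U_q(gl(N))`. -/
def KU (N i : ℕ) : Uq N := mkU N (fK i)
/-- `q^{-e_{ii}}` in `U_q(gl(N))`. -/
def KinvU (N i : ℕ) : Uq N := mkU N (fKinv i)
/-- `e_{i,i+1}` in `U_q(gl(N))`. -/
def EU (N i : ℕ) : Uq N := mkU N (fE i)
/-- `e_{i+1,i}` in `U_q(gl(N))`. -/
def FU (N i : ℕ) : Uq N := mkU N (fF i)

/-- `eUpD N i d` is the raising composite root vector `e_{i,i+d}`:
`e_{i,i+1} = E i` and `e_{ij} = e_{i,j-1} e_{j-1,j} - q⁻¹ e_{j-1,j} e_{i,j-1}`. -/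
def eUpD (N i : ℕ) : ℕ → Uq N
  | 0 => 0
  | 1 => EU N i
  | (d + 2) => eUpD N i (d + 1) * EU N (i + d + 1) - qq⁻¹ • (EU N (i + d + 1) * eUpD N i (d + 1))

/-- `eDnD N i d` is the lowering composite root vector `e_{i+d,i}`:
`e_{i+1,i} = F i` and `e_{ji} = e_{j,j-1} e_{j-1,i} - q e_{j-1,i} e_{j,j-1}`. -/
def eDnD (N i : ℕ) : ℕ → Uq N
  | 0 => 0
  | 1 => FU N i
  | (d + 2) => FU N (i + d + 1) * eDnD N i (d + 1) - qq • (eDnD N i (d + 1) * FU N (i + d + 1))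

/-- The Cartan–Weyl root vector `e_{ij}` (`i ≠ j`) of `U_q(gl(N))`. -/
def eGen (N i j : ℕ) : Uq N :=
  if i < j then eUpD N i (j - i) else if j < i then eDnD N j (i - j) else 0

/-- Primed raising composite root vectors: `e'_{i,i+1} = e_{i,i+1}` and
`e'_{ij} = e'_{i,j-1} e_{j-1,j} - q e_{j-1,j} e'_{i,j-1}`. -/
def eUpD' (N i : ℕ) : ℕ → Uq N
  | 0 => 0
  | 1 => EU N i
  | (d + 2) => eUpD' N i (d + 1) * EU N (i + d + 1) - qq • (EU N (i + d + 1) * eUpD' N i (d + 1))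

/-- Primed lowering composite root vectors: `e'_{i+1,i} = e_{i+1,i}` and
`e'_{ji} = e_{j,j-1} e'_{j-1,i} - q⁻¹ e'_{j-1,i} e_{j,j-1}`. -/
def eDnD' (N i : ℕ) : ℕ → Uq N
  | 0 => 0
  | 1 => FU N i
  | (d + 2) => FU N (i + d + 1) * eDnD' N i (d + 1) - qq⁻¹ • (eDnD' N i (d + 1) * FU N (i + d + 1))

/-- The primed Cartan–Weyl root vector `e'_{ij}` of `U_q(gl(N))`. -/
def eGen' (N i j : ℕ) : Uq N :=
  if i < j then eUpD' N i (j - i) else if j < i then eDnD' N j (i - j) else 0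

end

/-!
The recursion defining `e_{ji}` adds the simple root vector `e_{j,j-1}` on the left, so
`[e_{jk}, e_{ki}]_q = e_{ji}` follows by induction on `j - k`. In the inductive step
`e_{j+1,k} = [e_{j+1,j}, e_{jk}]_q`, and `e_{j+1,j}` commutes with `e_{ki}` because the
latter is built from the `e_{l+1,l}` with `l ≤ k - 1 ≤ j - 2`; the q-bracket identity
`[[c, a]_s, b]_t = [c, [a, b]_t]_s` for `c` commuting with `b` then moves `e_{j+1,j}` outside.
-/

section QBracket

variable {K R : Type*} [CommSemiring K] [Ring R] [Algebra K R]

def qBracket (a : K) (x y : R) : R := x * y - a • (y * x)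

theorem qBracket_qBracket_of_commute (s t : K) {a b c : R} (h : Commute c b) :
    qBracket t (qBracket s c a) b = qBracket s c (qBracket t a b) := by
  have hbca : b * (c * a) = c * (b * a) := by rw [← mul_assoc, ← h.eq, mul_assoc]
  simp only [qBracket, sub_mul, mul_sub, smul_mul_assoc, mul_smul_comm, smul_sub, smul_smul,
    mul_assoc, h.eq, hbca, mul_comm s t]
  abel

theorem Commute.qBracket_right (a : K) {x y z : R} (hy : Commute x y) (hz : Commute x z) :
    Commute x (qBracket a y z) :=
  (hy.mul_right hz).sub_right ((hz.mul_right hy).smul_right a)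

end QBracket

section LoweringRootVectors

variable {N : ℕ}

theorem FU_eq_zero {i : ℕ} (h : i = 0 ∨ N < i + 1) : FU N i = 0 := by
  simpa [FU, mkU] using RingQuot.mkAlgHom_rel kq (UqRel.Fzero (N := N) i h)

-- Out-of-range generators are `0`, so no range hypotheses are needed.
theorem FU_commute_FU {m n : ℕ} (h : m + 2 ≤ n ∨ n + 2 ≤ m) : Commute (FU N m) (FU N n) := by
  by_cases hm : 1 ≤ m ∧ m + 1 ≤ N
  · by_cases hn : 1 ≤ n ∧ n + 1 ≤ N
    · simpa [Commute, SemiconjBy, FU, mkU] using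
        RingQuot.mkAlgHom_rel kq (UqRel.FF (N := N) m n hm.1 hm.2 hn.1 hn.2 h)
    · rw [FU_eq_zero (i := n) (by omega)]
      exact Commute.zero_right _
  · rw [FU_eq_zero (i := m) (by omega)]
    exact Commute.zero_left _

theorem eDnD_succ {i d : ℕ} (hd : 1 ≤ d) :
    eDnD N i (d + 1) = qBracket qq (FU N (i + d)) (eDnD N i d) := by
  obtain ⟨d, rfl⟩ := Nat.exists_eq_add_of_le' hd
  rfl

theorem FU_commute_eDnD {i m : ℕ} (d : ℕ) (hm : i + d + 1 ≤ m) :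
    Commute (FU N m) (eDnD N i d) := by
  rcases Nat.eq_zero_or_pos d with rfl | hd
  · exact Commute.zero_right _
  induction d, hd using Nat.le_induction with
  | base => exact FU_commute_FU (by omega)
  | succ d hd ih =>
    rw [eDnD_succ hd]
    exact (FU_commute_FU (by omega)).qBracket_right qq (ih (by omega))

theorem qBracket_eDnD_eDnD {i e : ℕ} (he : 1 ≤ e) (d : ℕ) (hd : 1 ≤ d) :
    qBracket qq (eDnD N (i + e) d) (eDnD N i e) = eDnD N i (e + d) := by
  induction d, hd using Nat.le_induction with
  | base => exact (eDnD_succ he).symm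
  | succ d hd ih =>
    rw [eDnD_succ hd, qBracket_qBracket_of_commute qq qq (FU_commute_eDnD e (by omega)), ih,
      ← add_assoc, eDnD_succ (by omega), add_assoc]

theorem eGen_of_gt {i j : ℕ} (h : j < i) : eGen N i j = eDnD N j (i - j) := by
  rw [eGen, if_neg (by omega), if_pos h]

end LoweringRootVectors

theorem lowering_root_vector_indep_of_intermediate_general (N : ℕ) (i k j : ℕ)
    (hik : i < k) (hkj : k < j) :
    eGen N j k * eGen N k i - qq • (eGen N k i * eGen N j k) = eGen N j i := by
  rw [eGen_of_gt hkj, eGen_of_gt hik, eGen_of_gt (hik.trans hkj)]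
  obtain ⟨e, rfl⟩ : ∃ e, k = i + e := ⟨k - i, by omega⟩
  obtain ⟨d, rfl⟩ : ∃ d, j = i + e + d := ⟨j - (i + e), by omega⟩
  rw [Nat.add_sub_cancel_left, add_assoc, Nat.add_sub_cancel_left, Nat.add_sub_cancel_left]
  exact qBracket_eDnD_eDnD (by omega) d (by omega)

/-- in `U_q(gl(N))`, for `1 ≤ i < k < j ≤ N` one has
`[e_{jk}, e_{ki}]_q = e_{ji}`, i.e. `e_{jk} e_{ki} - q e_{ki} e_{jk} = e_{ji}`. -/
theorem lowering_root_vector_indep_of_intermediate (N : ℕ) (hN : 2 ≤ N) (i k j : ℕ)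
    (hi : 1 ≤ i) (hik : i < k) (hkj : k < j) (hj : j ≤ N) :
    eGen N j k * eGen N k i - qq • (eGen N k i * eGen N j k) = eGen N j i :=
  lowering_root_vector_indep_of_intermediate_general N i k j hik hkj
end

section
/- In U_q(gl(N)), for all 1 ≤ i < j < k < l ≤ N one has [e_{il}, e_{kj}] = 0, i.e. e_{il} commutes with e_{kj}. -/
/-!
The root vector `e_{kj}` is an iterated `q`-bracket of `e_{j+1,j}, …, e_{k,k-1}`, so it suffices
that `e_{il}` commutes with each `e_{b+1,b}` for `i < b < b + 1 < l`. Build `e_{il}` by successive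
`q`-brackets with `e_{c,c+1}`. Up to `c = b - 1` everything commutes with `e_{b+1,b}`; the bracket
with `e_{b,b+1}` gives `[e_{i,b+1}, e_{b+1,b}] = q⁻¹ e_{ib} K_b K_{b+1}⁻¹` (where
`K_m = q^{e_{mm}}`); the bracket with `e_{b+1,b+2}` kills this term, because `e_{ib} K_b K_{b+1}⁻¹`
and `e_{b+1,b+2}` commute up to exactly the factor `q⁻¹` used in that bracket; all later brackets
involve only generators commuting with `e_{b+1,b}`.
-/

section

variable {k R : Type*} [Field k] [Ring R] [Algebra k R]

def SkewCommute (w : k) (a b : R) : Prop := a * b = w • (b * a)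

namespace SkewCommute

variable {u v w c : k} {a b e x : R}

theorem of_commute (h : Commute a b) : SkewCommute (1 : k) a b := by
  rw [SkewCommute, one_smul]
  exact h

theorem commute (h : SkewCommute (1 : k) a b) : Commute a b := by
  rw [SkewCommute, one_smul] at h
  exact h

theorem mul_left (ha : SkewCommute u a e) (hb : SkewCommute v b e) :
    SkewCommute (u * v) (a * b) e := by
  unfold SkewCommute at *
  rw [mul_assoc, hb, mul_smul_comm, ← mul_assoc, ha, smul_mul_assoc, smul_smul, mul_assoc,
    mul_comm u v]

theorem mul_right (ha : SkewCommute u x a) (hb : SkewCommute v x b) :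
    SkewCommute (u * v) x (a * b) := by
  unfold SkewCommute at *
  rw [← mul_assoc, ha, smul_mul_assoc, mul_assoc, hb, mul_smul_comm, smul_smul, mul_assoc]

theorem smul_left (h : SkewCommute w a b) (c : k) : SkewCommute w (c • a) b := by
  unfold SkewCommute at *
  rw [smul_mul_assoc, h, mul_smul_comm, smul_comm]

theorem inv_left {a' : R} (haa' : a * a' = 1) (ha'a : a' * a = 1) (hw : w ≠ 0)
    (h : SkewCommute w a b) : SkewCommute w⁻¹ a' b := by
  have h' : b * a' = w • (a' * b) :=
    calc b * a' = a' * (a * b) * a' := by rw [← mul_assoc, ha'a, one_mul]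
      _ = w • (a' * b) := by
        rw [h, mul_smul_comm, smul_mul_assoc, mul_assoc, mul_assoc, haa', mul_one]
  rw [SkewCommute, h', smul_smul, inv_mul_cancel₀ hw, one_smul]

theorem qbracket_right (ha : SkewCommute u x a) (he : SkewCommute v x e) (c : k) :
    SkewCommute (u * v) x (a * e - c • (e * a)) := by
  have hae := ha.mul_right he
  have hea := he.mul_right ha
  unfold SkewCommute at *
  rw [mul_sub, mul_smul_comm, hae, hea, sub_mul, smul_mul_assoc, smul_sub, smul_comm _ c,
    mul_comm v u]

end SkewCommute

variable {a e f p p' : R} {c s : k}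

theorem commute_qbracket_of_skewCommute (hef : Commute e f)
    (h : SkewCommute c (a * f - f * a) e) : Commute (a * e - c • (e * a)) f := by
  have h' : (a * e - c • (e * a)) * f - f * (a * e - c • (e * a))
      = (a * f - f * a) * e - c • (e * (a * f - f * a)) := by
    simp only [sub_mul, mul_sub, smul_mul_assoc, mul_smul_comm, smul_sub, mul_assoc, hef.eq]
    simp only [← mul_assoc, hef.eq]
    abel
  rw [h, sub_self] at h'
  exact sub_eq_zero.mp h'

theorem qbracket_mul_sub_mul (hfa : Commute f a) (hef : e * f - f * e = s • (p - p'))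
    (hp : SkewCommute c p a) (hp' : SkewCommute c⁻¹ p' a) (hc : c ≠ 0) :
    (a * e - c • (e * a)) * f - f * (a * e - c • (e * a)) = (s * (1 - c ^ 2)) • (a * p) := by
  have h : (a * e - c • (e * a)) * f - f * (a * e - c • (e * a))
      = a * (e * f - f * e) - c • ((e * f - f * e) * a) := by
    simp only [sub_mul, mul_sub, smul_mul_assoc, mul_smul_comm, smul_sub, mul_assoc, hfa.eq]
    simp only [← mul_assoc, hfa.eq]
    abel
  have hcc : c * s * c⁻¹ = s := by field_simp
  rw [h, hef, mul_smul_comm, smul_mul_assoc, mul_sub, sub_mul, hp, hp', smul_sub, smul_sub,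
    smul_sub, smul_smul, smul_smul, smul_smul, smul_smul, hcc]
  module

end

theorem qq_ne_zero : qq ≠ 0 := RatFunc.X_ne_zero

theorem qq_sq_ne_one : qq ^ 2 ≠ 1 := by
  intro h
  have h' : algebraMap (Polynomial ℚ) kq (Polynomial.X ^ 2) = algebraMap (Polynomial ℚ) kq 1 := by
    simpa [qq, RatFunc.algebraMap_X] using h
  simpa using congrArg Polynomial.natDegree (IsFractionRing.injective (Polynomial ℚ) kq h')

theorem qq_sub_inv_ne_zero : qq - qq⁻¹ ≠ 0 := by
  intro h
  apply qq_sq_ne_one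
  have := qq_ne_zero
  field_simp at h
  linear_combination h

section

variable {N : ℕ}

theorem mkU_eq_of_rel {a b : FreeAlgebra kq UqGen} (h : UqRel N a b) : mkU N a = mkU N b :=
  RingQuot.mkAlgHom_rel kq h

theorem KU_mul_KinvU {a : ℕ} (h1 : 1 ≤ a) (h2 : a ≤ N) : KU N a * KinvU N a = 1 := by
  simpa [KU, KinvU] using mkU_eq_of_rel (UqRel.KKinv (N := N) a h1 h2)

theorem KinvU_mul_KU {a : ℕ} (h1 : 1 ≤ a) (h2 : a ≤ N) : KinvU N a * KU N a = 1 := by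
  simpa [KU, KinvU] using mkU_eq_of_rel (UqRel.KinvK (N := N) a h1 h2)

theorem skewCommute_KU_EU {a b : ℕ} (h1 : 1 ≤ a) (h2 : a ≤ N) (h3 : 1 ≤ b) (h4 : b + 1 ≤ N) :
    SkewCommute (qq ^ (((if a = b then 1 else 0) - (if a = b + 1 then 1 else 0) : ℤ)))
      (KU N a) (EU N b) := by
  have h := mkU_eq_of_rel (UqRel.KE (N := N) a b h1 h2 h3 h4)
  rw [map_mul, map_mul, map_smul] at h
  calc KU N a * EU N b = KU N a * EU N b * KinvU N a * KU N a := by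
        rw [mul_assoc _ (KinvU N a), KinvU_mul_KU h1 h2, mul_one]
    _ = _ := by rw [KU, EU, KinvU, h, smul_mul_assoc]

theorem skewCommute_KinvU_EU {a b : ℕ} (h1 : 1 ≤ a) (h2 : a ≤ N) (h3 : 1 ≤ b) (h4 : b + 1 ≤ N) :
    SkewCommute (qq ^ (((if a = b + 1 then 1 else 0) - (if a = b then 1 else 0) : ℤ)))
      (KinvU N a) (EU N b) := by
  have h := (skewCommute_KU_EU h1 h2 h3 h4).inv_left (KU_mul_KinvU h1 h2) (KinvU_mul_KU h1 h2)
    (zpow_ne_zero _ qq_ne_zero)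
  rwa [← zpow_neg, neg_sub] at h

theorem commute_KU_EU {a b : ℕ} (h1 : 1 ≤ a) (h2 : a ≤ N) (h3 : 1 ≤ b) (h4 : b + 1 ≤ N)
    (hab : a ≠ b) (hab' : a ≠ b + 1) : Commute (KU N a) (EU N b) :=
  SkewCommute.commute (by simpa [hab, hab'] using skewCommute_KU_EU h1 h2 h3 h4)

theorem commute_KinvU_EU {a b : ℕ} (h1 : 1 ≤ a) (h2 : a ≤ N) (h3 : 1 ≤ b) (h4 : b + 1 ≤ N)
    (hab : a ≠ b) (hab' : a ≠ b + 1) : Commute (KinvU N a) (EU N b) :=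
  SkewCommute.commute (by simpa [hab, hab'] using skewCommute_KinvU_EU h1 h2 h3 h4)

theorem skewCommute_KU_succ_EU {b : ℕ} (h1 : 1 ≤ b) (h2 : b + 1 ≤ N) :
    SkewCommute qq⁻¹ (KU N (b + 1)) (EU N b) := by
  simpa using skewCommute_KU_EU (a := b + 1) (by omega) h2 h1 h2

theorem skewCommute_KinvU_succ_EU {b : ℕ} (h1 : 1 ≤ b) (h2 : b + 1 ≤ N) :
    SkewCommute qq (KinvU N (b + 1)) (EU N b) := by
  simpa using skewCommute_KinvU_EU (a := b + 1) (by omega) h2 h1 h2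

theorem skewCommute_KinvU_EU_self {b : ℕ} (h1 : 1 ≤ b) (h2 : b + 1 ≤ N) :
    SkewCommute qq⁻¹ (KinvU N b) (EU N b) := by
  simpa using skewCommute_KinvU_EU (a := b) h1 (by omega) h1 h2

theorem EU_mul_FU_sub_self {a : ℕ} (h1 : 1 ≤ a) (h2 : a + 1 ≤ N) :
    EU N a * FU N a - FU N a * EU N a
      = (qq - qq⁻¹)⁻¹ • (KU N a * KinvU N (a + 1) - KU N (a + 1) * KinvU N a) := by
  simpa [KU, KinvU, EU, FU] using mkU_eq_of_rel (UqRel.EF (N := N) a a h1 h2 h1 h2)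

theorem commute_EU_FU {a b : ℕ} (h1 : 1 ≤ a) (h2 : a + 1 ≤ N) (h3 : 1 ≤ b) (h4 : b + 1 ≤ N)
    (hab : a ≠ b) : Commute (EU N a) (FU N b) := by
  have h := mkU_eq_of_rel (UqRel.EF (N := N) a b h1 h2 h3 h4)
  rw [if_neg hab, map_sub, map_mul, map_mul, map_zero] at h
  exact sub_eq_zero.mp h

theorem commute_EU_EU {a b : ℕ} (h1 : 1 ≤ a) (h2 : a + 1 ≤ N) (h3 : 1 ≤ b) (h4 : b + 1 ≤ N)
    (hab : a + 2 ≤ b ∨ b + 2 ≤ a) : Commute (EU N a) (EU N b) := by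
  have h := mkU_eq_of_rel (UqRel.EE (N := N) a b h1 h2 h3 h4 hab)
  rwa [map_mul, map_mul] at h

theorem eUpD_add_two (i d : ℕ) :
    eUpD N i (d + 2) = eUpD N i (d + 1) * EU N (i + d + 1)
      - qq⁻¹ • (EU N (i + d + 1) * eUpD N i (d + 1)) := rfl

theorem eDnD_add_two (i d : ℕ) :
    eDnD N i (d + 2) = FU N (i + d + 1) * eDnD N i (d + 1)
      - qq • (eDnD N i (d + 1) * FU N (i + d + 1)) := rfl

theorem commute_eUpD {X : Uq N} {i : ℕ} :
    ∀ {d : ℕ}, (∀ b, i ≤ b → b < i + d → Commute X (EU N b)) → Commute X (eUpD N i d)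
  | 0, _ => Commute.zero_right X
  | 1, h => h i le_rfl (by omega)
  | d + 2, h => by
    rw [eUpD_add_two]
    have hA := commute_eUpD (d := d + 1) fun b hb1 hb2 => h b hb1 (by omega)
    have hE := h (i + d + 1) (by omega) (by omega)
    exact (hA.mul_right hE).sub_right ((hE.mul_right hA).smul_right _)

theorem commute_eDnD {X : Uq N} {i : ℕ} :
    ∀ {d : ℕ}, (∀ b, i ≤ b → b < i + d → Commute X (FU N b)) → Commute X (eDnD N i d)
  | 0, _ => Commute.zero_right X
  | 1, h => h i le_rfl (by omega)
  | d + 2, h => by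
    rw [eDnD_add_two]
    have hA := commute_eDnD (d := d + 1) fun b hb1 hb2 => h b hb1 (by omega)
    have hF := h (i + d + 1) (by omega) (by omega)
    exact (hF.mul_right hA).sub_right ((hA.mul_right hF).smul_right _)

theorem skewCommute_eUpD_succ {X : Uq N} {w : kq} {i d : ℕ}
    (hcomm : ∀ b, i ≤ b → b < i + d → Commute X (EU N b))
    (htop : SkewCommute w X (EU N (i + d))) : SkewCommute w X (eUpD N i (d + 1)) := by
  cases d with
  | zero => exact htop
  | succ d =>
    rw [eUpD_add_two]
    have hA := SkewCommute.of_commute (k := kq) (commute_eUpD hcomm)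
    have h := hA.qbracket_right htop qq⁻¹
    rwa [one_mul, ← add_assoc] at h

theorem eUpD_mul_FU_sub {i d : ℕ} (hi : 1 ≤ i) (hd : 1 ≤ d) (hN : i + d + 1 ≤ N) :
    eUpD N i (d + 1) * FU N (i + d) - FU N (i + d) * eUpD N i (d + 1)
      = qq⁻¹ • (eUpD N i d * (KU N (i + d) * KinvU N (i + d + 1))) := by
  obtain ⟨d, rfl⟩ : ∃ d', d = d' + 1 := ⟨d - 1, by omega⟩
  rw [eUpD_add_two, ← add_assoc]
  have hFA : Commute (FU N (i + d + 1)) (eUpD N i (d + 1)) :=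
    commute_eUpD fun b _ _ =>
      (commute_EU_FU (a := b) (b := i + d + 1) (by omega) (by omega) (by omega) hN (by omega)).symm
  have hP : SkewCommute qq⁻¹ (KU N (i + d + 1) * KinvU N (i + d + 2)) (eUpD N i (d + 1)) := by
    have hK : SkewCommute qq⁻¹ (KU N (i + d + 1)) (eUpD N i (d + 1)) :=
      skewCommute_eUpD_succ (fun b _ _ => commute_KU_EU (by omega) (by omega) (by omega)
        (by omega) (by omega) (by omega)) (skewCommute_KU_succ_EU (by omega) (by omega))
    have hKinv : Commute (KinvU N (i + d + 2)) (eUpD N i (d + 1)) :=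
      commute_eUpD fun b _ _ => commute_KinvU_EU (by omega) hN (by omega) (by omega)
        (by omega) (by omega)
    simpa using hK.mul_left (.of_commute hKinv)
  have hQ : SkewCommute qq⁻¹⁻¹ (KU N (i + d + 2) * KinvU N (i + d + 1)) (eUpD N i (d + 1)) := by
    have hK : Commute (KU N (i + d + 2)) (eUpD N i (d + 1)) :=
      commute_eUpD fun b _ _ => commute_KU_EU (by omega) hN (by omega) (by omega)
        (by omega) (by omega)
    have hKinv : SkewCommute qq (KinvU N (i + d + 1)) (eUpD N i (d + 1)) :=
      skewCommute_eUpD_succ (fun b _ _ => commute_KinvU_EU (by omega) (by omega) (by omega)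
        (by omega) (by omega) (by omega)) (skewCommute_KinvU_succ_EU (by omega) (by omega))
    simpa using (SkewCommute.of_commute hK).mul_left hKinv
  have hs : (qq - qq⁻¹)⁻¹ * (1 - qq⁻¹ ^ 2) = qq⁻¹ := by
    rw [show 1 - qq⁻¹ ^ 2 = (qq - qq⁻¹) * qq⁻¹ by rw [sub_mul, mul_inv_cancel₀ qq_ne_zero, sq],
      inv_mul_cancel_left₀ qq_sub_inv_ne_zero]
  rw [qbracket_mul_sub_mul hFA (EU_mul_FU_sub_self (by omega) hN) hP hQ (inv_ne_zero qq_ne_zero),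
    hs]

theorem commute_eUpD_FU {i t d : ℕ} (hi : 1 ≤ i) (ht : 1 ≤ t) (htd : t + 2 ≤ d) (hN : i + d ≤ N) :
    Commute (eUpD N i d) (FU N (i + t)) := by
  induction d, htd using Nat.le_induction with
  | base =>
    rw [eUpD_add_two]
    refine commute_qbracket_of_skewCommute ?_ ?_
    · exact commute_EU_FU (by omega) hN (by omega) (by omega) (by omega)
    · have hB : Commute (eUpD N i t) (EU N (i + t + 1)) :=
        (commute_eUpD fun b _ _ => commute_EU_EU (by omega) (by omega) (by omega) (by omega)
          (.inr (by omega))).symm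
      have hK : Commute (KU N (i + t)) (EU N (i + t + 1)) :=
        commute_KU_EU (by omega) (by omega) (by omega) hN (by omega) (by omega)
      have hKinv : SkewCommute qq⁻¹ (KinvU N (i + t + 1)) (EU N (i + t + 1)) :=
        skewCommute_KinvU_EU_self (by omega) hN
      rw [eUpD_mul_FU_sub hi ht (by omega)]
      simpa using ((SkewCommute.of_commute hB).mul_left
        ((SkewCommute.of_commute hK).mul_left hKinv)).smul_left qq⁻¹
  | succ d hd ih =>
    obtain ⟨d, rfl⟩ : ∃ d', d = d' + 1 := ⟨d - 1, by omega⟩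
    rw [eUpD_add_two]
    have hA := ih (by omega)
    have hE := (commute_EU_FU (N := N) (a := i + d + 1) (b := i + t) (by omega) hN (by omega)
      (by omega) (by omega))
    exact (hA.mul_left hE).sub_left ((hE.mul_left hA).smul_left _)

theorem eGen_of_lt {i j : ℕ} (h : i < j) : eGen N i j = eUpD N i (j - i) := if_pos h

end

theorem eil_commutes_with_ekj_general (N : ℕ) (i j k l : ℕ)
    (hi : 1 ≤ i) (hij : i < j) (hjk : j < k) (hkl : k < l) (hl : l ≤ N) :
    eGen N i l * eGen N k j = eGen N k j * eGen N i l := by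
  rw [eGen_of_lt (by omega), eGen_of_gt hjk]
  refine commute_eDnD fun b hb hbk => ?_
  have h := commute_eUpD_FU (N := N) (i := i) (t := b - i) (d := l - i) hi (by omega) (by omega)
    (by omega)
  rwa [show i + (b - i) = b by omega] at h

/-- in `U_q(gl(N))`, for `1 ≤ i < j < k < l ≤ N`,
`[e_{il}, e_{kj}] = 0`, i.e. `e_{il}` commutes with `e_{kj}`. -/
theorem eil_commutes_with_ekj (N : ℕ) (hN : 2 ≤ N) (i j k l : ℕ)
    (hi : 1 ≤ i) (hij : i < j) (hjk : j < k) (hkl : k < l) (hl : l ≤ N) :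
    eGen N i l * eGen N k j = eGen N k j * eGen N i l :=
  eil_commutes_with_ekj_general N i j k l hi hij hjk hkl hl
end

section
/- Let N = n + 1 with n ≥ 1, and let * be the noncompact Cartan involution of U_q(gl(n+1)) with real q, i.e. the k-linear involutive anti-automorphism with (q^{±e_{ii}})^* = q^{±e_{ii}}, e_{i,i+1}^* = e_{i+1,i} and e_{i+1,i}^* = e_{i,i+1} for 1 ≤ i ≤ n-1, and e_{n,n+1}^* = -e_{n+1,n}, e_{n+1,n}^* = -e_{n,n+1}. Then for all 1 ≤ i ≤ n one has e_{i,n+1}^* = -e'_{n+1,i} and e_{n+1,i}^* = -e'_{i,n+1}, where e'_{i,n+1} and e'_{n+1,i} are the primed composite root vectors. -/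
/-- A `k`-linear anti-automorphism of `U_q(gl(N))`: additive, `k`-linear,
unital, anti-multiplicative and bijective. -/
def IsLinearAntiAut (N : ℕ) (φ : Uq N → Uq N) : Prop :=
  Function.Bijective φ ∧
  (∀ x y : Uq N, φ (x + y) = φ x + φ y) ∧
  (∀ (c : kq) (x : Uq N), φ (c • x) = c • φ x) ∧
  φ 1 = 1 ∧
  (∀ x y : Uq N, φ (x * y) = φ y * φ x)

/-- The property of being the noncompact Cartan involution `*` of `U_q(gl(n+1))` with
real `q`: a `k`-linear anti-automorphism with `(q^{±e_{ii}})^* = q^{±e_{ii}}`,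
`e_{i,i+1}^* = e_{i+1,i}` and `e_{i+1,i}^* = e_{i,i+1}` for `i ≠ n`, and
`e_{n,n+1}^* = -e_{n+1,n}`, `e_{n+1,n}^* = -e_{n,n+1}`. -/
def IsNoncompactStarReal (n N : ℕ) (φ : Uq N → Uq N) : Prop :=
  IsLinearAntiAut N φ ∧
  (∀ i, 1 ≤ i → i ≤ N → φ (KU N i) = KU N i ∧ φ (KinvU N i) = KinvU N i) ∧
  (∀ i, 1 ≤ i → i + 1 ≤ N → i ≠ n → φ (EU N i) = FU N i ∧ φ (FU N i) = EU N i) ∧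
  φ (EU N n) = -FU N n ∧ φ (FU N n) = -EU N n

/-!
An anti-automorphism reverses the two products in each step of the recursion defining
`e_{i,j}` and `e_{j,i}`; with `q^{∓1}` attached to the other product, this is the recursion
for the primed vectors `e'_{j,i}` and `e'_{i,j}`. Along the chain from `i` to `n + 1` every
simple root vector is exchanged with its opposite without a sign except `e_{n,n+1}` and
`e_{n+1,n}`, which contribute a single overall factor `-1`.
-/

namespace IsLinearAntiAut

variable {N : ℕ} {φ : Uq N → Uq N}

theorem map_sub (hφ : IsLinearAntiAut N φ) (x y : Uq N) : φ (x - y) = φ x - φ y :=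
  (AddMonoidHom.mk' φ hφ.2.1).map_sub x y

theorem map_eUpD_add_two (hφ : IsLinearAntiAut N φ) {i d : ℕ} (c : kq)
    (hd : φ (eUpD N i (d + 1)) = eDnD' N i (d + 1))
    (hE : φ (EU N (i + d + 1)) = c • FU N (i + d + 1)) :
    φ (eUpD N i (d + 2)) = c • eDnD' N i (d + 2) := by
  have hsub := hφ.map_sub
  obtain ⟨-, -, hsmul, -, hmul⟩ := hφ
  rw [eUpD, eDnD', hsub, hsmul, hmul, hmul, hd, hE,
    smul_sub, smul_mul_assoc, mul_smul_comm, smul_comm c qq⁻¹]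

theorem map_eDnD_add_two (hφ : IsLinearAntiAut N φ) {i d : ℕ} (c : kq)
    (hd : φ (eDnD N i (d + 1)) = eUpD' N i (d + 1))
    (hF : φ (FU N (i + d + 1)) = c • EU N (i + d + 1)) :
    φ (eDnD N i (d + 2)) = c • eUpD' N i (d + 2) := by
  have hsub := hφ.map_sub
  obtain ⟨-, -, hsmul, -, hmul⟩ := hφ
  rw [eDnD, eUpD', hsub, hsmul, hmul, hmul, hd, hF,
    smul_sub, smul_mul_assoc, mul_smul_comm, smul_comm c qq]

theorem map_eUpD (hφ : IsLinearAntiAut N φ) {i d : ℕ} (c : kq)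
    (hE : ∀ j, i ≤ j → j < i + d → φ (EU N j) = FU N j)
    (hlast : φ (EU N (i + d)) = c • FU N (i + d)) :
    φ (eUpD N i (d + 1)) = c • eDnD' N i (d + 1) := by
  induction d generalizing c with
  | zero => simpa only [eUpD, eDnD', add_zero] using hlast
  | succ d ih =>
    have hprev : φ (eUpD N i (d + 1)) = eDnD' N i (d + 1) := by
      simpa only [one_smul] using ih 1 (fun j hij hj ↦ hE j hij (by omega))
        (by simpa only [one_smul] using hE (i + d) le_self_add (by omega))
    exact hφ.map_eUpD_add_two c hprev hlast

theorem map_eDnD (hφ : IsLinearAntiAut N φ) {i d : ℕ} (c : kq)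
    (hF : ∀ j, i ≤ j → j < i + d → φ (FU N j) = EU N j)
    (hlast : φ (FU N (i + d)) = c • EU N (i + d)) :
    φ (eDnD N i (d + 1)) = c • eUpD' N i (d + 1) := by
  induction d generalizing c with
  | zero => simpa only [eDnD, eUpD', add_zero] using hlast
  | succ d ih =>
    have hprev : φ (eDnD N i (d + 1)) = eUpD' N i (d + 1) := by
      simpa only [one_smul] using ih 1 (fun j hij hj ↦ hF j hij (by omega))
        (by simpa only [one_smul] using hF (i + d) le_self_add (by omega))
    exact hφ.map_eDnD_add_two c hprev hlast

end IsLinearAntiAut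

theorem noncompact_star_real_on_cartan_weyl_general (n : ℕ)
    (φ : Uq (n + 1) → Uq (n + 1)) (hφ : IsNoncompactStarReal n (n + 1) φ)
    (i : ℕ) (hi : 1 ≤ i) (hin : i ≤ n) :
    φ (eGen (n + 1) i (n + 1)) = -eGen' (n + 1) (n + 1) i ∧
    φ (eGen (n + 1) (n + 1) i) = -eGen' (n + 1) i (n + 1) := by
  obtain ⟨d, rfl⟩ : ∃ d, n = i + d := ⟨n - i, by omega⟩
  obtain ⟨hanti, -, hEF, hEn, hFn⟩ := hφ
  have hEF' (j : ℕ) (hij : i ≤ j) (hj : j < i + d) :=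
    hEF j (by omega) (by omega) (by omega)
  have hlt : i < i + d + 1 := by omega
  have hlen : i + d + 1 - i = d + 1 := by omega
  simp only [eGen, eGen', if_pos hlt, if_neg (lt_asymm hlt), hlen]
  constructor
  · exact (hanti.map_eUpD (-1) (fun j hij hj ↦ (hEF' j hij hj).1)
      (hEn.trans (neg_one_smul kq _).symm)).trans (neg_one_smul kq (eDnD' _ i _))
  · exact (hanti.map_eDnD (-1) (fun j hij hj ↦ (hEF' j hij hj).2)
      (hFn.trans (neg_one_smul kq _).symm)).trans (neg_one_smul kq (eUpD' _ i _))

/-- for the noncompact Cartan involution `*` of `U_q(gl(n+1))` with real `q`,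
one has `e_{i,n+1}^* = -e'_{n+1,i}` and `e_{n+1,i}^* = -e'_{i,n+1}` for `1 ≤ i ≤ n`, where
the `e'` are the primed composite root vectors. -/
theorem noncompact_star_real_on_cartan_weyl (n : ℕ) (hn : 1 ≤ n)
    (φ : Uq (n + 1) → Uq (n + 1)) (hφ : IsNoncompactStarReal n (n + 1) φ)
    (hinv : ∀ x, φ (φ x) = x)
    (i : ℕ) (hi : 1 ≤ i) (hin : i ≤ n) :
    φ (eGen (n + 1) i (n + 1)) = -eGen' (n + 1) (n + 1) i ∧
    φ (eGen (n + 1) (n + 1) i) = -eGen' (n + 1) i (n + 1) :=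
  noncompact_star_real_on_cartan_weyl_general n φ hφ i hi hin
end
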